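/- arXiv:2412.02031 — 2 statements merged into one kernel-verified Lean document; each statement's English description precedes it below -/
import Mathlib

section
/- For every integer t ≥ 1, ∫_{−∞}^{∞} Li_t(−e^{x})/(1 + e^{x}) dx = −t·ζ(t+1), where ζ is the Riemann zeta function. -/
open MeasureTheory Filter

/-- Dirichlet eta function at natural arguments: `η(0)=1/2`, `η(1)=log 2`,
and for `s ≥ 2` the (absolutely convergent) series `∑ (-1)^{n+1}/n^s`. -/
noncomputable def dEta (s : ℕ) : ℝ :=
  if s = 0 then 1/2
  else if s = 1 then Real.log 2
  else ∑' n : ℕ, (-1 : ℝ)^n / ((n : ℝ)+1)^s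

/-- Riemann zeta at natural arguments `s ≥ 2`: `∑ 1/n^s`. -/
noncomputable def rZeta (s : ℕ) : ℝ := ∑' n : ℕ, 1 / ((n : ℝ)+1)^s

/-- `negLi t u = Li_t(-u)` for `t ≥ 1`, `u > 0`, via the Fermi–Dirac integral
representation `Li_t(-u) = -(1/(t-1)!) ∫_0^∞ s^{t-1}/(u⁻¹ e^s + 1) ds`. -/
noncomputable def negLi (t : ℕ) (u : ℝ) : ℝ :=
  -(1 / ((t-1).factorial : ℝ)) * ∫ s in Set.Ioi (0:ℝ), s^(t-1) / (u⁻¹ * Real.exp s + 1)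

/-- Extended harmonic number `H_λ^{(p)} = ∑_{j=1}^∞ (1/j^p - 1/(j+λ)^p)`. -/
noncomputable def Hext (p : ℕ) (lam : ℝ) : ℝ :=
  ∑' j : ℕ, (1/((j:ℝ)+1)^p - 1/(((j:ℝ)+1)+lam)^p)

/-- Alternating linear Euler sum `S^{+-}_{p,t}(r) = ∑_{n=1}^∞ (-1)^{n+1} H_{rn}^{(p)}/n^t`,
as a limit of partial sums. -/
noncomputable def eulerS (p t : ℕ) (r : ℝ) : ℝ :=
  limUnder atTop
    (fun N => ∑ n ∈ Finset.range N, (-1:ℝ)^n * Hext p (r*((n:ℝ)+1)) / ((n:ℝ)+1)^t)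

/-!
By the Fermi–Dirac representation, `Li_t(-eˣ)/(1 + eˣ)` is `-(1/(t-1)!)` times the integral over
`s > 0` of the positive function `s^(t-1) eˣ / ((eˢ + eˣ)(1 + eˣ))`, so Tonelli lets us integrate in
`x` first. With `c = eˢ` that integral is elementary, `∫ eˣ/((c + eˣ)(1 + eˣ)) dx = log c/(c - 1)`,
which leaves the Bose integral `∫₀^∞ sᵗ/(eˢ - 1) ds`. Expanding `1/(eˢ - 1) = ∑ₙ e^(-(n+1)s)` and
integrating termwise against the Gamma integral gives `t! ζ(t+1)`, and `t!/(t-1)! = t`.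
-/

open Set Real Topology
open scoped Nat

section Tonelli

variable {α β : Type*} [MeasurableSpace α] [MeasurableSpace β] {μ : Measure α} {ν : Measure β}
  {f : α → β → ℝ}

theorem integral_integral_eq_toReal_lintegral_lintegral [SFinite ν]
    (hf : AEStronglyMeasurable (Function.uncurry f) (μ.prod ν))
    (hf0 : ∀ᵐ x ∂μ, 0 ≤ᵐ[ν] f x) (hfx : ∀ᵐ x ∂μ, Integrable (f x) ν) :
    ∫ x, ∫ y, f x y ∂ν ∂μ = (∫⁻ x, ∫⁻ y, ENNReal.ofReal (f x y) ∂ν ∂μ).toReal := by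
  rw [integral_eq_lintegral_of_nonneg_ae (hf0.mono fun x hx => integral_nonneg_of_ae hx)
    hf.integral_prod_right']
  congr 1
  refine lintegral_congr_ae ?_
  filter_upwards [hf0, hfx] with x hx0 hxi using ofReal_integral_eq_lintegral_ofReal hxi hx0

theorem integral_integral_swap_of_nonneg [SFinite μ] [SFinite ν]
    (hf : AEStronglyMeasurable (Function.uncurry f) (μ.prod ν))
    (hf0 : ∀ᵐ x ∂μ, 0 ≤ᵐ[ν] f x) (hf0' : ∀ᵐ y ∂ν, 0 ≤ᵐ[μ] fun x => f x y)
    (hfx : ∀ᵐ x ∂μ, Integrable (f x) ν) (hfy : ∀ᵐ y ∂ν, Integrable (fun x => f x y) μ) :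
    ∫ x, ∫ y, f x y ∂ν ∂μ = ∫ y, ∫ x, f x y ∂μ ∂ν := by
  rw [integral_integral_eq_toReal_lintegral_lintegral hf hf0 hfx,
    integral_integral_eq_toReal_lintegral_lintegral hf.prod_swap hf0' hfy,
    lintegral_lintegral_swap hf.aemeasurable.ennreal_ofReal]

end Tonelli

theorem integrableOn_pow_mul_exp_neg_mul_Ioi (n : ℕ) {b : ℝ} (hb : 0 < b) :
    IntegrableOn (fun s : ℝ => s ^ n * exp (-(b * s))) (Ioi 0) := by
  refine (integrableOn_rpow_mul_exp_neg_mul_rpow (s := n)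
    (neg_one_lt_zero.trans_le n.cast_nonneg) one_pos hb).congr_fun (fun s _ => ?_) measurableSet_Ioi
  simp [rpow_natCast, rpow_one]

theorem integral_pow_mul_exp_neg_mul_Ioi (n : ℕ) {b : ℝ} (hb : 0 < b) :
    ∫ s in Ioi (0 : ℝ), s ^ n * exp (-(b * s)) = n ! / b ^ (n + 1) := by
  have h := integral_rpow_mul_exp_neg_mul_Ioi (a := n + 1) (by positivity) hb
  simp only [add_sub_cancel_right, rpow_natCast] at h
  rw [h, Gamma_nat_eq_factorial, ← Nat.cast_succ, rpow_natCast, div_pow, one_pow,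
    Nat.succ_eq_add_one]
  ring

theorem integrable_exp_div_add_exp_mul_one_add_exp {c : ℝ} (hc : 0 < c) :
    Integrable fun x : ℝ => exp x / ((c + exp x) * (1 + exp x)) := by
  have hmeas : AEStronglyMeasurable (fun x : ℝ => exp x / ((c + exp x) * (1 + exp x))) :=
    (by fun_prop (disch := intros; positivity) :
      Continuous fun x : ℝ => exp x / ((c + exp x) * (1 + exp x))).aestronglyMeasurable
  rw [← integrableOn_univ, ← Iic_union_Ioi (a := 0)]
  refine IntegrableOn.union ?_ ?_
  · refine Integrable.mono' ((integrableOn_exp_Iic 0).div_const c) hmeas.restrict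
      (ae_of_all _ fun x => ?_)
    rw [norm_of_nonneg (by positivity), div_le_div_iff_of_pos_left (exp_pos x) (by positivity) hc]
    nlinarith [exp_pos x]
  · refine Integrable.mono' (exp_neg_integrableOn_Ioi 0 one_pos) hmeas.restrict
      (ae_of_all _ fun x => ?_)
    rw [norm_of_nonneg (by positivity), neg_one_mul, exp_neg, div_le_iff₀ (by positivity)]
    have hx := exp_pos x
    calc exp x = (exp x)⁻¹ * (exp x * exp x) := by field_simp
      _ ≤ (exp x)⁻¹ * ((c + exp x) * (1 + exp x)) := by gcongr <;> linarith

theorem integral_exp_div_add_exp_mul_one_add_exp {c : ℝ} (hc : 0 < c) (hc1 : c ≠ 1) :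
    ∫ x : ℝ, exp x / ((c + exp x) * (1 + exp x)) = log c / (c - 1) := by
  have hc1' : c - 1 ≠ 0 := sub_ne_zero.mpr hc1
  have hderiv (x : ℝ) : HasDerivAt (fun x => (log (1 + exp x) - log (c + exp x)) / (c - 1))
      (exp x / ((c + exp x) * (1 + exp x))) x := by
    have h1 : 0 < 1 + exp x := by positivity
    have h2 : 0 < c + exp x := by positivity
    refine ((((hasDerivAt_exp x).const_add 1).log h1.ne').sub
      (((hasDerivAt_exp x).const_add c).log h2.ne')).div_const (c - 1) |>.congr_deriv ?_
    field_simp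
    ring
  have hbot : Tendsto (fun x => (log (1 + exp x) - log (c + exp x)) / (c - 1)) atBot
      (𝓝 ((log (1 + 0) - log (c + 0)) / (c - 1))) := by
    refine ((Tendsto.log ?_ (by norm_num)).sub (Tendsto.log ?_ (by simpa using hc.ne'))).div_const _
    all_goals exact tendsto_exp_atBot.const_add _
  have htop : Tendsto (fun x => (log (1 + exp x) - log (c + exp x)) / (c - 1)) atTop
      (𝓝 (log ((0 + 1) / (c * 0 + 1)) / (c - 1))) := by
    have h0 : Tendsto (fun x : ℝ => exp (-x)) atTop (𝓝 0) :=
      tendsto_exp_atBot.comp tendsto_neg_atTop_atBot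
    refine (Tendsto.log (((h0.add_const 1).div ((h0.const_mul c).add_const 1) (by simp)))
      (by simp)).div_const _ |>.congr fun x => ?_
    have hx := exp_pos x
    rw [← log_div (by positivity) (by positivity), Pi.div_apply, exp_neg]
    congr 2
    field_simp
  rw [integral_of_hasDerivAt_of_tendsto hderiv (integrable_exp_div_add_exp_mul_one_add_exp hc)
    hbot htop]
  simp only [add_zero, log_one, mul_zero, zero_add, div_one]
  ring

theorem hasSum_pow_mul_exp_neg_succ_mul (k : ℕ) {s : ℝ} (hs : 0 < s) :
    HasSum (fun n : ℕ => s ^ k * exp (-((n + 1) * s))) (s ^ k / (exp s - 1)) := by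
  have hr : exp (-s) < 1 := exp_lt_one_iff.mpr (neg_neg_of_pos hs)
  have hs1 : exp s - 1 ≠ 0 := (sub_pos.mpr (one_lt_exp_iff.mpr hs)).ne'
  have hterm : (fun n : ℕ => s ^ k * exp (-((n + 1) * s))) =
      fun n => s ^ k * exp (-s) * exp (-s) ^ n := by
    ext n
    rw [← exp_nat_mul, mul_assoc, ← exp_add]
    ring_nf
  have hsum : s ^ k / (exp s - 1) = s ^ k * exp (-s) * (1 - exp (-s))⁻¹ := by
    rw [exp_neg]
    field_simp
  rw [hterm, hsum]
  exact (hasSum_geometric_of_lt_one (exp_pos _).le hr).mul_left _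

theorem summable_one_div_succ_pow {q : ℕ} (hq : 1 < q) :
    Summable fun n : ℕ => 1 / ((n : ℝ) + 1) ^ q := by
  simpa using (summable_nat_add_iff 1).mpr (Real.summable_one_div_nat_pow.mpr hq)

theorem integral_pow_div_exp_sub_one_Ioi {k : ℕ} (hk : 1 ≤ k) :
    ∫ s in Ioi (0 : ℝ), s ^ k / (exp s - 1) = k ! * rZeta (k + 1) := by
  have hb (n : ℕ) : (0 : ℝ) < n + 1 := by positivity
  have hnorm (n : ℕ) : ∫ s in Ioi (0 : ℝ), ‖s ^ k * exp (-((n + 1) * s))‖ =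
      k ! / ((n : ℝ) + 1) ^ (k + 1) := by
    rw [← integral_pow_mul_exp_neg_mul_Ioi k (hb n)]
    exact setIntegral_congr_fun measurableSet_Ioi fun s (hs : 0 < s) =>
      norm_of_nonneg (by positivity)
  rw [setIntegral_congr_fun measurableSet_Ioi
      fun s hs => (hasSum_pow_mul_exp_neg_succ_mul k hs).tsum_eq.symm,
    ← integral_tsum_of_summable_integral_norm
      fun n => integrableOn_pow_mul_exp_neg_mul_Ioi k (hb n)]
  · simp_rw [integral_pow_mul_exp_neg_mul_Ioi k (hb _), rZeta, ← tsum_mul_left, mul_one_div]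
  · simp_rw [hnorm, ← mul_one_div (k ! : ℝ)]
    exact (summable_one_div_succ_pow (by omega)).mul_left _

theorem negLi_exp_div_one_add_exp (p : ℕ) (x : ℝ) :
    negLi (p + 1) (exp x) / (1 + exp x) =
      -(1 / p ! : ℝ) * ∫ s in Ioi (0 : ℝ), s ^ p * (exp x / ((exp s + exp x) * (1 + exp x))) := by
  rw [negLi, Nat.add_sub_cancel, mul_div_assoc, ← integral_div]
  congr 2
  ext s
  have := exp_pos x
  field_simp

theorem integrableOn_pow_mul_exp_div_Ioi (p : ℕ) (x : ℝ) :
    IntegrableOn (fun s => s ^ p * (exp x / ((exp s + exp x) * (1 + exp x)))) (Ioi 0) := by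
  refine Integrable.mono' ((integrableOn_pow_mul_exp_neg_mul_Ioi p one_pos).const_mul (exp x))
    (Continuous.aestronglyMeasurable (by fun_prop (disch := intros; positivity))) ?_
  filter_upwards [ae_restrict_mem measurableSet_Ioi] with s (hs : 0 < s)
  rw [norm_of_nonneg (by positivity)]
  calc s ^ p * (exp x / ((exp s + exp x) * (1 + exp x)))
      ≤ s ^ p * (exp x / exp s) := by gcongr; nlinarith [exp_pos x, exp_pos s]
    _ = exp x * (s ^ p * exp (-(1 * s))) := by rw [one_mul, exp_neg]; ring

theorem integral_integral_pow_mul_exp_div (p : ℕ) :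
    ∫ x, ∫ s in Ioi (0 : ℝ), s ^ p * (exp x / ((exp s + exp x) * (1 + exp x))) =
      ∫ s in Ioi (0 : ℝ), s ^ (p + 1) / (exp s - 1) := by
  have hpos : ∀ᵐ s ∂volume.restrict (Ioi (0 : ℝ)), 0 < s := ae_restrict_mem measurableSet_Ioi
  rw [integral_integral_swap_of_nonneg
    (Continuous.aestronglyMeasurable (by fun_prop (disch := intros; positivity)))
    (ae_of_all _ fun x => hpos.mono fun s (hs : 0 < s) => by positivity)
    (hpos.mono fun s (hs : 0 < s) => ae_of_all _ fun x => by positivity)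
    (ae_of_all _ (integrableOn_pow_mul_exp_div_Ioi p))
    (ae_of_all _ fun s => (integrable_exp_div_add_exp_mul_one_add_exp (exp_pos s)).const_mul _)]
  refine setIntegral_congr_fun measurableSet_Ioi fun s (hs : 0 < s) => ?_
  rw [integral_const_mul, integral_exp_div_add_exp_mul_one_add_exp (exp_pos s)
    (one_lt_exp_iff.mpr hs).ne', log_exp, pow_succ, mul_div_assoc]

theorem stmt5 (t : ℕ) (ht : 1 ≤ t) :
    (∫ x : ℝ, negLi t (Real.exp x) / (1 + Real.exp x)) = -(t : ℝ) * rZeta (t+1) := by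
  obtain ⟨p, rfl⟩ := Nat.exists_eq_add_of_le' ht
  calc ∫ x, negLi (p + 1) (exp x) / (1 + exp x)
      = -(1 / p ! : ℝ) *
          ∫ x, ∫ s in Ioi (0 : ℝ), s ^ p * (exp x / ((exp s + exp x) * (1 + exp x))) := by
        simp_rw [negLi_exp_div_one_add_exp, integral_const_mul]
    _ = -(1 / p ! : ℝ) * ((p + 1)! * rZeta (p + 2)) := by
        rw [integral_integral_pow_mul_exp_div, integral_pow_div_exp_sub_one_Ioi (by omega)]
    _ = -((p + 1 : ℕ) : ℝ) * rZeta (p + 1 + 1) := by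
        push_cast [Nat.factorial_succ]
        field_simp
end

section
/- Let p ∈ ℕ (possibly 0) and a, b ∈ ℝ with ab > 0; set q = a/b. Then sign(b)·b^{2p+1}·∫_{−∞}^{∞} x^{2p} · (−log(1 + e^{ax}))/(1 + e^{bx}) dx = −[ (2p)!/q^{2p+1} + q·(2p+1)! ]·η(2p+2), where log is the real natural logarithm. -/
open MeasureTheory Filter

/-! For `a, b > 0`, fold the integral onto `(0, ∞)` by `x ↦ -x`. Since
`log (1 + e^{ax}) = ax + log (1 + e^{-ax})` and `1 / (1 + e^{-bx}) = 1 - 1 / (1 + e^{bx})`,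
the folded integrand is `-x^{2p} log (1 + e^{-ax}) - a x^{2p+1} / (1 + e^{bx})`. Expanding
`log (1 + e^{-y})` and `1 / (1 + e^{y})` as alternating series in `e^{-ny}` and integrating
termwise with `∫₀^∞ x^k e^{-cx} dx = k! / c^{k+1}` turns both terms into multiples of `η(2p+2)`.
The case `a, b < 0` reduces to this one by the same substitution. -/

open Set Real
open scoped Nat

theorem integrableOn_pow_mul_exp_neg_mul (k : ℕ) {c : ℝ} (hc : 0 < c) :
    IntegrableOn (fun x : ℝ => x ^ k * exp (-(c * x))) (Ioi 0) := by
  simpa [rpow_natCast] using integrableOn_rpow_mul_exp_neg_mul_rpow (s := k) (p := 1)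
    (neg_one_lt_zero.trans_le k.cast_nonneg) one_pos hc

theorem integral_pow_mul_exp_neg_mul (k : ℕ) {c : ℝ} (hc : 0 < c) :
    ∫ x in Ioi (0:ℝ), x ^ k * exp (-(c * x)) = k ! / c ^ (k + 1) := by
  have h := integral_rpow_mul_exp_neg_mul_Ioi (a := k + 1) (by positivity) hc
  simp only [add_sub_cancel_right, rpow_natCast] at h
  rw [h, Gamma_nat_eq_factorial, ← Nat.cast_succ, rpow_natCast, one_div, inv_pow, div_eq_inv_mul]

theorem integral_pow_mul_tsum_exp_neg (k : ℕ) {c : ℝ} (hc : 0 < c) {w : ℕ → ℝ}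
    (hw : Summable fun n : ℕ => |w n| / ((n : ℝ) + 1) ^ (k + 1)) :
    ∫ x in Ioi (0:ℝ), x ^ k * ∑' n : ℕ, w n * exp (-(((n : ℝ) + 1) * (c * x))) =
      k ! / c ^ (k + 1) * ∑' n : ℕ, w n / ((n : ℝ) + 1) ^ (k + 1) := by
  set F : ℕ → ℝ → ℝ := fun n x => w n * (x ^ k * exp (-((((n : ℝ) + 1) * c) * x)))
  have hnc (n : ℕ) : 0 < ((n : ℝ) + 1) * c := by positivity
  have hscale (n : ℕ) (v : ℝ) : v * (k ! / ((((n : ℝ) + 1) * c) ^ (k + 1))) =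
      k ! / c ^ (k + 1) * (v / ((n : ℝ) + 1) ^ (k + 1)) := by
    rw [mul_pow]; field_simp
  have hF_int (n : ℕ) : IntegrableOn (F n) (Ioi 0) :=
    (integrableOn_pow_mul_exp_neg_mul k (hnc n)).const_mul (w n)
  have hF_integral (n : ℕ) : ∫ x in Ioi (0:ℝ), F n x =
      k ! / c ^ (k + 1) * (w n / ((n : ℝ) + 1) ^ (k + 1)) := by
    rw [integral_const_mul, integral_pow_mul_exp_neg_mul k (hnc n), hscale]
  have hF_norm (n : ℕ) : ∫ x in Ioi (0:ℝ), ‖F n x‖ =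
      k ! / c ^ (k + 1) * (|w n| / ((n : ℝ) + 1) ^ (k + 1)) := by
    rw [← hscale, ← integral_pow_mul_exp_neg_mul k (hnc n), ← integral_const_mul]
    refine setIntegral_congr_fun measurableSet_Ioi fun x (hx : 0 < x) => ?_
    simp only [F, norm_mul, norm_pow, Real.norm_eq_abs, abs_of_pos hx, abs_of_pos (exp_pos _)]
  have hsum := integral_tsum_of_summable_integral_norm hF_int
    (by simpa only [hF_norm] using hw.mul_left _)
  simp only [hF_integral, tsum_mul_left] at hsum
  rw [hsum]
  congr 1 with x
  simp only [F, ← tsum_mul_left]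
  congr 1 with n
  ring_nf

theorem abs_neg_exp_neg_lt_one {y : ℝ} (hy : 0 < y) : |-exp (-y)| < 1 := by
  rw [abs_neg, abs_of_pos (exp_pos _), Real.exp_lt_one_iff, neg_lt_zero]
  exact hy

theorem hasSum_log_one_add_exp_neg {y : ℝ} (hy : 0 < y) :
    HasSum (fun n : ℕ => (-1) ^ n / ((n : ℝ) + 1) * exp (-(((n : ℝ) + 1) * y)))
      (log (1 + exp (-y))) := by
  have h := (hasSum_pow_div_log_of_abs_lt_one (abs_neg_exp_neg_lt_one hy)).neg
  rw [sub_neg_eq_add, neg_neg] at h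
  refine h.congr_fun fun n => ?_
  rw [neg_pow (exp (-y)), ← exp_nat_mul, pow_succ]
  push_cast
  ring_nf

theorem hasSum_one_div_one_add_exp {y : ℝ} (hy : 0 < y) :
    HasSum (fun n : ℕ => (-1) ^ n * exp (-(((n : ℝ) + 1) * y))) (1 / (1 + exp y)) := by
  have h := (hasSum_geometric_of_abs_lt_one (abs_neg_exp_neg_lt_one hy)).mul_left (exp (-y))
  have hsum : exp (-y) * (1 - -exp (-y))⁻¹ = 1 / (1 + exp y) := by
    rw [sub_neg_eq_add, exp_neg]
    field_simp
    ring
  rw [hsum] at h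
  refine h.congr_fun fun n => ?_
  rw [neg_pow (exp (-y)), ← exp_nat_mul, mul_left_comm, ← exp_add]
  ring_nf

theorem log_one_add_exp (y : ℝ) : log (1 + exp y) = y + log (1 + exp (-y)) := by
  have h : 1 + exp y = exp y * (1 + exp (-y)) := by
    rw [mul_add, mul_one, ← exp_add, add_neg_cancel, exp_zero, add_comm]
  rw [h, log_mul (exp_ne_zero y) (by positivity), log_exp]

theorem summable_one_div_nat_add_one_pow {s : ℕ} (hs : 2 ≤ s) :
    Summable fun n : ℕ => 1 / ((n : ℝ) + 1) ^ s := by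
  have h := (summable_nat_add_iff 1).mpr (Real.summable_one_div_nat_pow.mpr hs)
  simpa only [Nat.cast_add, Nat.cast_one] using h

theorem dEta_eq_tsum {s : ℕ} (hs : 2 ≤ s) :
    dEta s = ∑' n : ℕ, (-1 : ℝ) ^ n / ((n : ℝ) + 1) ^ s := by
  rw [dEta, if_neg (by omega), if_neg (by omega)]

theorem integral_pow_mul_log_one_add_exp_neg (k : ℕ) {a : ℝ} (ha : 0 < a) :
    ∫ x in Ioi (0:ℝ), x ^ k * log (1 + exp (-(a * x))) = k ! / a ^ (k + 1) * dEta (k + 2) := by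
  have hw : Summable fun n : ℕ => |(-1) ^ n / ((n : ℝ) + 1)| / ((n : ℝ) + 1) ^ (k + 1) := by
    refine (summable_one_div_nat_add_one_pow (s := k + 2) (by omega)).congr fun n => ?_
    rw [abs_div, abs_pow, abs_neg, abs_one, one_pow, abs_of_pos (by positivity), div_div,
      ← pow_succ']
  rw [setIntegral_congr_fun measurableSet_Ioi fun x (hx : 0 < x) => by
      rw [← (hasSum_log_one_add_exp_neg (mul_pos ha hx)).tsum_eq],
    integral_pow_mul_tsum_exp_neg k ha hw, dEta_eq_tsum (by omega)]
  simp only [div_div, ← pow_succ']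

theorem integral_pow_div_one_add_exp (k : ℕ) (hk : 1 ≤ k) {b : ℝ} (hb : 0 < b) :
    ∫ x in Ioi (0:ℝ), x ^ k / (1 + exp (b * x)) = k ! / b ^ (k + 1) * dEta (k + 1) := by
  have hw : Summable fun n : ℕ => |(-1 : ℝ) ^ n| / ((n : ℝ) + 1) ^ (k + 1) := by
    simpa only [abs_pow, abs_neg, abs_one, one_pow]
      using summable_one_div_nat_add_one_pow (s := k + 1) (by omega)
  rw [setIntegral_congr_fun measurableSet_Ioi fun x (hx : 0 < x) => by
      rw [div_eq_mul_one_div, ← (hasSum_one_div_one_add_exp (mul_pos hb hx)).tsum_eq],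
    integral_pow_mul_tsum_exp_neg k hb hw, dEta_eq_tsum (by omega)]

theorem integrableOn_pow_mul_log_one_add_exp_neg (k : ℕ) {a : ℝ} (ha : 0 < a) :
    IntegrableOn (fun x : ℝ => x ^ k * log (1 + exp (-(a * x)))) (Ioi 0) := by
  refine (integrableOn_pow_mul_exp_neg_mul k ha).mono' (by fun_prop (disch := positivity)) ?_
  filter_upwards [self_mem_ae_restrict measurableSet_Ioi] with x (hx : 0 < x)
  have hlog_le : log (1 + exp (-(a * x))) ≤ exp (-(a * x)) := by
    linarith [log_le_sub_one_of_pos (by positivity : 0 < 1 + exp (-(a * x)))]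
  have hlog_nonneg : 0 ≤ log (1 + exp (-(a * x))) :=
    log_nonneg (by linarith [exp_pos (-(a * x))])
  rw [norm_mul, norm_pow, Real.norm_eq_abs, Real.norm_eq_abs, abs_of_pos hx,
    abs_of_nonneg hlog_nonneg]
  gcongr

theorem integrableOn_pow_div_one_add_exp (k : ℕ) {b : ℝ} (hb : 0 < b) :
    IntegrableOn (fun x : ℝ => x ^ k / (1 + exp (b * x))) (Ioi 0) := by
  refine (integrableOn_pow_mul_exp_neg_mul k hb).mono'
    ((continuous_pow k).div (by fun_prop) fun x => by positivity).aestronglyMeasurable ?_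
  filter_upwards [self_mem_ae_restrict measurableSet_Ioi] with x (hx : 0 < x)
  rw [norm_div, norm_pow, Real.norm_eq_abs, Real.norm_eq_abs, abs_of_pos hx,
    abs_of_pos (by positivity), div_eq_mul_inv, exp_neg]
  gcongr
  linarith

theorem integral_eq_integral_Ioi_add_comp_neg {E : Type*} [NormedAddCommGroup E]
    [NormedSpace ℝ E] {f : ℝ → E} (hpos : IntegrableOn f (Ioi 0))
    (hneg : IntegrableOn (fun x => f (-x)) (Ioi 0)) :
    ∫ x, f x = ∫ x in Ioi 0, (f x + f (-x)) := by
  have hIic : IntegrableOn f (Iic 0) := by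
    rw [← (Measure.measurePreserving_neg volume).integrableOn_comp_preimage
      (Homeomorph.neg ℝ).measurableEmbedding, neg_preimage, neg_Iic, neg_zero,
      integrableOn_Ici_iff_integrableOn_Ioi]
    exact hneg
  rw [← intervalIntegral.integral_Iic_add_Ioi hIic hpos, ← neg_zero, ← integral_comp_neg_Ioi,
    neg_zero, integral_add hpos hneg, add_comm]

theorem integral_pow_mul_neg_log_div_of_pos (p : ℕ) {a b : ℝ} (ha : 0 < a) (hb : 0 < b) :
    ∫ x : ℝ, x ^ (2 * p) * (-(log (1 + exp (a * x)))) / (1 + exp (b * x)) =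
      -((2 * p)! / a ^ (2 * p + 1) + a * ((2 * p + 1)! / b ^ (2 * p + 2))) *
        dEta (2 * p + 2) := by
  set ℓ : ℝ → ℝ := fun x => x ^ (2 * p) * log (1 + exp (-(a * x)))
  set ψ : ℝ → ℝ := fun x => x ^ (2 * p + 1) / (1 + exp (b * x))
  set σ : ℝ → ℝ := fun x => 1 / (1 + exp (b * x))
  have hℓ : IntegrableOn ℓ (Ioi 0) := integrableOn_pow_mul_log_one_add_exp_neg (2 * p) ha
  have hψ : IntegrableOn ψ (Ioi 0) := integrableOn_pow_div_one_add_exp (2 * p + 1) hb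
  have hℓσ : IntegrableOn (fun x => ℓ x * σ x) (Ioi 0) := by
    refine hℓ.mul_bdd (c := 1) (by fun_prop (disch := positivity)) (ae_of_all _ fun x => ?_)
    rw [Real.norm_eq_abs, abs_of_pos (by positivity), div_le_one (by positivity)]
    linarith [exp_pos (b * x)]
  have hpos (x : ℝ) : x ^ (2 * p) * (-(log (1 + exp (a * x)))) / (1 + exp (b * x)) =
      -(a * ψ x) - ℓ x * σ x := by
    simp only [ℓ, ψ, σ, log_one_add_exp (a * x)]
    ring
  have hneg (x : ℝ) : (-x) ^ (2 * p) * (-(log (1 + exp (a * -x)))) / (1 + exp (b * -x)) =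
      -ℓ x + ℓ x * σ x := by
    simp only [ℓ, σ, Even.neg_pow (even_two_mul p), mul_neg, exp_neg]
    field_simp
    ring
  rw [integral_eq_integral_Ioi_add_comp_neg
    (IntegrableOn.congr_fun ((hψ.const_mul a).neg.sub hℓσ) (fun x _ => (hpos x).symm)
      measurableSet_Ioi)
    (IntegrableOn.congr_fun (hℓ.neg.add hℓσ) (fun x _ => (hneg x).symm) measurableSet_Ioi)]
  have hsum (x : ℝ) : x ^ (2 * p) * (-(log (1 + exp (a * x)))) / (1 + exp (b * x)) +
      (-x) ^ (2 * p) * (-(log (1 + exp (a * -x)))) / (1 + exp (b * -x)) = -(a * ψ x + ℓ x) := by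
    rw [hpos, hneg]
    ring
  simp only [hsum]
  rw [integral_neg, integral_add (hψ.const_mul a) hℓ, integral_const_mul,
    integral_pow_div_one_add_exp (2 * p + 1) (by omega) hb,
    integral_pow_mul_log_one_add_exp_neg (2 * p) ha]
  ring

theorem integral_pow_mul_neg_log_div_neg (p : ℕ) (a b : ℝ) :
    ∫ x : ℝ, x ^ (2 * p) * (-(log (1 + exp (-a * x)))) / (1 + exp (-b * x)) =
      ∫ x : ℝ, x ^ (2 * p) * (-(log (1 + exp (a * x)))) / (1 + exp (b * x)) := by
  rw [← integral_neg_eq_self]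
  simp only [Even.neg_pow (even_two_mul p), neg_mul_neg]

theorem stmt8 (p : ℕ) (a b : ℝ) (hab : a * b > 0) :
    Real.sign b * b^(2*p+1) *
      (∫ x : ℝ, x^(2*p) * (-(Real.log (1 + Real.exp (a*x)))) / (1 + Real.exp (b*x))) =
    -((((2*p).factorial : ℝ))/(a/b)^(2*p+1) + (a/b) * (((2*p+1).factorial : ℝ))) *
      dEta (2*p+2) := by
  have key {a b : ℝ} (ha : 0 < a) (hb : 0 < b) :
      b ^ (2 * p + 1) *
        (∫ x : ℝ, x ^ (2 * p) * (-(log (1 + exp (a * x)))) / (1 + exp (b * x))) =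
      -((2 * p)! / (a / b) ^ (2 * p + 1) + a / b * (2 * p + 1)!) * dEta (2 * p + 2) := by
    rw [integral_pow_mul_neg_log_div_of_pos p ha hb, div_pow]
    field_simp
    ring
  rcases mul_pos_iff.mp hab with ⟨ha, hb⟩ | ⟨ha, hb⟩
  · rw [sign_of_pos hb, one_mul, key ha hb]
  · rw [sign_of_neg hb, ← integral_pow_mul_neg_log_div_neg, ← neg_div_neg_eq a b,
      ← key (neg_pos.2 ha) (neg_pos.2 hb), Odd.neg_pow ⟨p, by ring⟩]
    ring
end
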